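/- arXiv:1302.3720 — 10 statements merged into one kernel-verified Lean document; each statement's English description precedes it below -/
import Mathlib

section
/- Let W > 0, λ > 0, t_C ≥ 0 and E_C > 0 be real constants. The function E(s) = (W·s² + E_C)·(1 + λ·(W/s + t_C)) is strictly convex on the open interval (0, ∞), tends to +∞ as s → 0⁺ and as s → +∞, and therefore admits a unique minimizer s* in (0, ∞). -/
open Real Filter Set

private lemma strictConvexOn_congr {s : Set ℝ} {f g : ℝ → ℝ}
    (hg : StrictConvexOn ℝ s g) (h : ∀ x ∈ s, f x = g x) : StrictConvexOn ℝ s f := by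
  refine ⟨hg.1, fun x hx y hy hxy a b ha hb hab => ?_⟩
  rw [h x hx, h y hy, h _ (hg.1 hx hy ha.le hb.le hab)]
  exact hg.2 hx hy hxy ha hb hab

private lemma strictConvexOn_const_mul {s : Set ℝ} {f : ℝ → ℝ} {c : ℝ}
    (hc : 0 < c) (hf : StrictConvexOn ℝ s f) : StrictConvexOn ℝ s (fun x => c * f x) := by
  refine ⟨hf.1, fun x hx y hy hxy a b ha hb hab => ?_⟩
  have := hf.2 hx hy hxy ha hb hab
  simp only [smul_eq_mul] at *
  nlinarith [hf.2 hx hy hxy ha hb hab]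

/-- For `W > 0`, `λ > 0`, `t_C ≥ 0`, `E_C > 0`, the expected energy
`E(s) = (W s² + E_C)(1 + λ (W/s + t_C))` is strictly convex on `(0, ∞)`, tends to `+∞`
as `s → 0⁺` and as `s → +∞`, and admits a unique minimizer on `(0, ∞)`. -/
theorem stmt_0 (W lam tC EC : ℝ) (hW : 0 < W) (hlam : 0 < lam) (htC : 0 ≤ tC)
    (hEC : 0 < EC) :
    StrictConvexOn ℝ (Set.Ioi (0 : ℝ))
      (fun s : ℝ => (W * s ^ 2 + EC) * (1 + lam * (W / s + tC))) ∧
    Tendsto (fun s : ℝ => (W * s ^ 2 + EC) * (1 + lam * (W / s + tC)))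
      (nhdsWithin 0 (Set.Ioi (0 : ℝ))) atTop ∧
    Tendsto (fun s : ℝ => (W * s ^ 2 + EC) * (1 + lam * (W / s + tC))) atTop atTop ∧
    ∃! sstar : ℝ, sstar ∈ Set.Ioi (0 : ℝ) ∧ ∀ s ∈ Set.Ioi (0 : ℝ),
      (W * sstar ^ 2 + EC) * (1 + lam * (W / sstar + tC)) ≤
        (W * s ^ 2 + EC) * (1 + lam * (W / s + tC)) := by
  set f : ℝ → ℝ := fun s => (W * s ^ 2 + EC) * (1 + lam * (W / s + tC)) with hf
  set A : ℝ := (1 + lam * tC) * W with hA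
  set B : ℝ := lam * W ^ 2 with hB
  set C : ℝ := (1 + lam * tC) * EC with hC
  set D : ℝ := lam * W * EC with hD
  have honetC : 0 < 1 + lam * tC := by positivity
  have hA' : 0 < A := by positivity
  have hB' : 0 < B := by positivity
  have hC' : 0 < C := by positivity
  have hD' : 0 < D := by positivity
  set g : ℝ → ℝ := fun s => (A * s ^ 2 + B * s + C) + D * s⁻¹ with hg
  have heq : ∀ x ∈ Ioi (0 : ℝ), f x = g x := by
    intro x hx
    have hx0 : x ≠ 0 := ne_of_gt hx
    simp only [hf, hg, hA, hB, hC, hD]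
    field_simp
    ring
  -- strict convexity
  have hsq : StrictConvexOn ℝ (Ioi (0:ℝ)) (fun x : ℝ => A * x ^ 2) :=
    strictConvexOn_const_mul hA'
      (((Even.strictConvexOn_pow (by norm_num) (by norm_num)).subset (subset_univ _)
        (convex_Ioi 0)))
  have hlin : ConvexOn ℝ (Ioi (0:ℝ)) (fun x : ℝ => B * x + C) := by
    refine ⟨convex_Ioi 0, fun x _ y _ a b ha hb hab => le_of_eq ?_⟩
    simp only [smul_eq_mul]
    linear_combination (-C) * hab
  have hinv : StrictConvexOn ℝ (Ioi (0:ℝ)) (fun x : ℝ => D * x⁻¹) := by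
    have h := strictConvexOn_zpow (m := -1) (by norm_num) (by norm_num)
    have h' : StrictConvexOn ℝ (Ioi (0:ℝ)) (fun x : ℝ => x⁻¹) := by
      refine strictConvexOn_congr h ?_
      intro x hx; simp [zpow_neg_one]
    exact strictConvexOn_const_mul hD' h'
  have hgconv : StrictConvexOn ℝ (Ioi (0:ℝ)) g :=
    strictConvexOn_congr ((hsq.add_convexOn hlin).add hinv) fun x _ => by simp only [hg, Pi.add_apply]; ring
  have hconv : StrictConvexOn ℝ (Ioi (0:ℝ)) f := strictConvexOn_congr hgconv heq
  -- lower bounds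
  have hlb1 : ∀ x ∈ Ioi (0:ℝ), D * x⁻¹ ≤ f x := by
    intro x hx
    rw [heq x hx]
    simp only [hg]
    have hx' : (0:ℝ) < x := hx
    have : 0 ≤ A * x ^ 2 + B * x + C := by positivity
    linarith
  have hlb2 : ∀ x ∈ Ioi (0:ℝ), A * x ^ 2 ≤ f x := by
    intro x hx
    rw [heq x hx]
    simp only [hg]
    have hx' : (0:ℝ) < x := hx
    have : 0 ≤ B * x + C + D * x⁻¹ := by positivity
    linarith
  -- tendsto at 0⁺
  have ht0 : Tendsto f (nhdsWithin 0 (Ioi (0:ℝ))) atTop := by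
    have h1 : Tendsto (fun x : ℝ => D * x⁻¹) (nhdsWithin 0 (Ioi (0:ℝ))) atTop :=
      tendsto_inv_nhdsGT_zero.const_mul_atTop hD'
    exact tendsto_atTop_mono' _ (eventually_mem_nhdsWithin.mono fun x hx => hlb1 x hx) h1
  -- tendsto at +∞
  have htop : Tendsto f atTop atTop := by
    have h1 : Tendsto (fun x : ℝ => A * x ^ 2) atTop atTop :=
      (tendsto_pow_atTop (two_ne_zero)).const_mul_atTop hA'
    refine tendsto_atTop_mono' _ ?_ h1
    filter_upwards [eventually_gt_atTop (0:ℝ)] with x hx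
    exact hlb2 x hx
  refine ⟨hconv, ht0, htop, ?_⟩
  -- existence of minimizer
  have hcont : ContinuousOn f (Ioi (0:ℝ)) := by
    apply ContinuousOn.mul
    · fun_prop
    · apply continuousOn_const.add
      apply continuousOn_const.mul
      apply ContinuousOn.add _ continuousOn_const
      exact continuousOn_const.div continuousOn_id fun x hx => ne_of_gt hx
  set M : ℝ := f 1 with hM
  obtain ⟨t, htmem, htsub⟩ := (ht0.eventually (eventually_gt_atTop M)).exists_mem
  obtain ⟨U, hUopen, hU0, hUsub⟩ := mem_nhdsWithin.1 htmem
  obtain ⟨ε, hε, hball⟩ := Metric.isOpen_iff.1 hUopen 0 hU0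
  set a : ℝ := min (ε / 2) 1 with ha
  have ha0 : 0 < a := by positivity
  have ha1 : a ≤ 1 := min_le_right _ _
  have hasmall : ∀ x, 0 < x → x < a → M < f x := by
    intro x hx hxa
    refine htsub x (hUsub ⟨hball ?_, hx⟩)
    rw [Metric.mem_ball, Real.dist_eq, sub_zero, abs_of_pos hx]
    calc x < a := hxa
    _ ≤ ε / 2 := min_le_left _ _
    _ < ε := by linarith
  obtain ⟨b0, hb0⟩ := (htop.eventually (eventually_gt_atTop M)).exists_forall_of_atTop
  set b : ℝ := max b0 1 with hb
  have hb1 : 1 ≤ b := le_max_right _ _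
  have h1K : (1:ℝ) ∈ Icc a b := ⟨ha1, hb1⟩
  have hKsub : Icc a b ⊆ Ioi (0:ℝ) := fun x hx => lt_of_lt_of_le ha0 hx.1
  obtain ⟨x, hxK, hxmin⟩ := isCompact_Icc.exists_isMinOn ⟨1, h1K⟩ (hcont.mono hKsub)
  have hxpos : x ∈ Ioi (0:ℝ) := hKsub hxK
  have hxM : f x ≤ M := hxmin h1K
  have hxglobal : ∀ s ∈ Ioi (0:ℝ), f x ≤ f s := by
    intro s hs
    by_cases hsK : s ∈ Icc a b
    · exact hxmin hsK
    · rcases lt_or_ge s a with h | hsa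
      · exact le_of_lt (lt_of_le_of_lt hxM (hasmall s hs h))
      · have hbs : b < s := by
          by_contra hb'
          push_neg at hb'
          exact hsK ⟨hsa, hb'⟩
        have : M < f s := hb0 s (le_trans (le_max_left _ _) hbs.le)
        linarith
  refine ⟨x, ⟨hxpos, hxglobal⟩, ?_⟩
  -- uniqueness
  rintro y ⟨hypos, hyglobal⟩
  by_contra hne
  have hfeq : f y = f x := le_antisymm (hyglobal x hxpos) (hxglobal y hypos)
  have hmid : (1/2 : ℝ) • y + (1/2 : ℝ) • x ∈ Ioi (0:ℝ) :=
    hconv.1 hypos hxpos (by norm_num) (by norm_num) (by norm_num)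
  have hlt := hconv.2 hypos hxpos hne (by norm_num : (0:ℝ) < 1/2)
    (by norm_num : (0:ℝ) < 1/2) (by norm_num)
  rw [hfeq] at hlt
  have : f x ≤ f ((1/2 : ℝ) • y + (1/2 : ℝ) • x) := hxglobal _ hmid
  simp only [smul_eq_mul] at hlt this
  linarith
end

section
/- Let W > 0, λ > 0, t_C ≥ 0 and E_C > 0 be real constants, and let E(s) = (W·s² + E_C)·(1 + λ·(W/s + t_C)). A point s > 0 is the (unique) minimizer of E on (0, ∞) if and only if it satisfies the cubic equation 2·(1 + λ·t_C)·s³ + λ·W·s² = λ·E_C. -/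
set_option maxHeartbeats 800000

open Real Set

lemma key_identity (W lam tC EC s t : ℝ) (hs : 0 < s) (ht : 0 < t) :
    s * t * ((W * t ^ 2 + EC) * (1 + lam * (W / t + tC)) -
        (W * s ^ 2 + EC) * (1 + lam * (W / s + tC))) =
      (t - s) ^ 2 * (W * s * ((1 + lam * tC) * (t + 2 * s) + lam * W)) +
        (t - s) * (W * (2 * (1 + lam * tC) * s ^ 3 + lam * W * s ^ 2 - lam * EC)) := by
  field_simp
  ring

/-- A point `s > 0` minimizes
`E(s) = (W s² + E_C)(1 + λ (W/s + t_C))` over `(0, ∞)` if and only if it satisfies the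
cubic equation `2 (1 + λ t_C) s³ + λ W s² = λ E_C`. -/
theorem stmt_1 (W lam tC EC : ℝ) (hW : 0 < W) (hlam : 0 < lam) (htC : 0 ≤ tC)
    (hEC : 0 < EC) (s : ℝ) (hs : 0 < s) :
    (∀ t : ℝ, 0 < t →
        (W * s ^ 2 + EC) * (1 + lam * (W / s + tC)) ≤
          (W * t ^ 2 + EC) * (1 + lam * (W / t + tC))) ↔
      2 * (1 + lam * tC) * s ^ 3 + lam * W * s ^ 2 = lam * EC := by
  have ha : (0:ℝ) < 1 + lam * tC := by positivity
  constructor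
  · intro h
    by_contra hne
    rcases lt_or_gt_of_ne hne with hDneg | hDpos
    · -- D := LHS - RHS < 0 : choose t = s + ε with small ε > 0
      have hD : 2 * (1 + lam * tC) * s ^ 3 + lam * W * s ^ 2 - lam * EC < 0 := by linarith
      have hK0 : (0:ℝ) < 2 * (s * ((1 + lam * tC) * (3 * s + 1) + lam * W)) := by positivity
      obtain ⟨ε, hε0, hε1, hεD⟩ : ∃ ε : ℝ, 0 < ε ∧ ε ≤ 1 ∧
          ε * (2 * (s * ((1 + lam * tC) * (3 * s + 1) + lam * W))) ≤
            -(2 * (1 + lam * tC) * s ^ 3 + lam * W * s ^ 2 - lam * EC) := by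
        refine ⟨min 1 ((-(2 * (1 + lam * tC) * s ^ 3 + lam * W * s ^ 2 - lam * EC)) /
            (2 * (s * ((1 + lam * tC) * (3 * s + 1) + lam * W)))),
          lt_min one_pos (div_pos (by linarith) hK0), min_le_left _ _, ?_⟩
        calc _ ≤ (-(2 * (1 + lam * tC) * s ^ 3 + lam * W * s ^ 2 - lam * EC)) /
              (2 * (s * ((1 + lam * tC) * (3 * s + 1) + lam * W))) *
              (2 * (s * ((1 + lam * tC) * (3 * s + 1) + lam * W))) :=
            mul_le_mul_of_nonneg_right (min_le_right _ _) hK0.le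
          _ = _ := div_mul_cancel₀ _ hK0.ne'
      have ht : 0 < s + ε := by linarith
      have hmin := h (s + ε) ht
      have hid := key_identity W lam tC EC s (s + ε) hs ht
      have hts : s + ε - s = ε := by ring
      rw [hts] at hid
      have hcore : ε * (W * (ε * (s * ((1 + lam * tC) * (s + ε + 2 * s) + lam * W)) +
          (2 * (1 + lam * tC) * s ^ 3 + lam * W * s ^ 2 - lam * EC))) < 0 := by
        apply mul_neg_of_pos_of_neg hε0
        apply mul_neg_of_pos_of_neg hW
        nlinarith [mul_le_mul_of_nonneg_left hε1 (mul_pos (mul_pos hε0 hs) ha).le]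
      have hLHS : 0 ≤ s * (s + ε) * ((W * (s + ε) ^ 2 + EC) * (1 + lam * (W / (s + ε) + tC)) -
          (W * s ^ 2 + EC) * (1 + lam * (W / s + tC))) :=
        mul_nonneg (mul_pos hs ht).le (sub_nonneg.mpr hmin)
      nlinarith [hid, hcore, hLHS]
    · -- D > 0 : choose t = s - ε with small ε > 0
      have hD : 0 < 2 * (1 + lam * tC) * s ^ 3 + lam * W * s ^ 2 - lam * EC := by linarith
      have hK0 : (0:ℝ) < 2 * (s * ((1 + lam * tC) * (3 * s) + lam * W)) := by positivity
      obtain ⟨ε, hε0, hε1, hεD⟩ : ∃ ε : ℝ, 0 < ε ∧ ε ≤ s / 2 ∧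
          ε * (2 * (s * ((1 + lam * tC) * (3 * s) + lam * W))) ≤
            2 * (1 + lam * tC) * s ^ 3 + lam * W * s ^ 2 - lam * EC := by
        refine ⟨min (s / 2) ((2 * (1 + lam * tC) * s ^ 3 + lam * W * s ^ 2 - lam * EC) /
            (2 * (s * ((1 + lam * tC) * (3 * s) + lam * W)))),
          lt_min (by linarith) (div_pos hD hK0), min_le_left _ _, ?_⟩
        calc _ ≤ (2 * (1 + lam * tC) * s ^ 3 + lam * W * s ^ 2 - lam * EC) /
              (2 * (s * ((1 + lam * tC) * (3 * s) + lam * W))) *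
              (2 * (s * ((1 + lam * tC) * (3 * s) + lam * W))) :=
            mul_le_mul_of_nonneg_right (min_le_right _ _) hK0.le
          _ = _ := div_mul_cancel₀ _ hK0.ne'
      have ht : 0 < s - ε := by linarith
      have hmin := h (s - ε) ht
      have hid := key_identity W lam tC EC s (s - ε) hs ht
      have hts : s - ε - s = -ε := by ring
      rw [hts] at hid
      have hcore : ε * (W * (ε * (s * ((1 + lam * tC) * (s - ε + 2 * s) + lam * W)) -
          (2 * (1 + lam * tC) * s ^ 3 + lam * W * s ^ 2 - lam * EC))) < 0 := by
        apply mul_neg_of_pos_of_neg hε0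
        apply mul_neg_of_pos_of_neg hW
        nlinarith [hεD, hD, mul_nonneg (mul_nonneg (mul_nonneg hε0.le hε0.le) hs.le) ha.le]
      have hLHS : 0 ≤ s * (s - ε) * ((W * (s - ε) ^ 2 + EC) * (1 + lam * (W / (s - ε) + tC)) -
          (W * s ^ 2 + EC) * (1 + lam * (W / s + tC))) :=
        mul_nonneg (mul_pos hs ht).le (sub_nonneg.mpr hmin)
      nlinarith [hid, hcore, hLHS]
  · intro heq t ht
    have hid := key_identity W lam tC EC s t hs ht
    have hD0 : W * (2 * (1 + lam * tC) * s ^ 3 + lam * W * s ^ 2 - lam * EC) = 0 := by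
      rw [heq]; ring
    rw [hD0, mul_zero, add_zero] at hid
    have hpos : 0 ≤ (t - s) ^ 2 * (W * s * ((1 + lam * tC) * (t + 2 * s) + lam * W)) := by
      positivity
    nlinarith [mul_pos hs ht]
end

section
/- Let W > 0, λ > 0, t_C ≥ 0 and D > 0 be real constants, and let T(s) = (W/s + t_C)·(1 + λ·(W/s + t_C)) for s > 0. Then T is strictly decreasing on (0, ∞) and tends to t_C + λ·t_C² as s → +∞. Consequently: (i) if D ≤ t_C + λ·t_C², then there is no s > 0 with T(s) ≤ D; (ii) if D > t_C + λ·t_C², then for every s > 0 one has T(s) ≤ D if and only if s ≥ s₀, where s₀ = W·(1 + 2λ·t_C + √(4λ·D + 1)) / (2·(D − t_C·(1 + λ·t_C))); moreover T(s₀) = D. -/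
/-!
Writing `u = W / s + t_C`, the expected time is `T(s) = q(u)` with `q(u) = u (1 + λ u)`.
The map `s ↦ u` decreases strictly from `+∞` to `t_C` on `(0, ∞)` while `q` increases strictly
on `[0, ∞)`, which gives monotonicity, the limit `q(t_C) = t_C + λ t_C²` and the infeasible case.
In the feasible case `s₀` is exactly the speed at which `u` equals the positive root
`(√(4 λ D + 1) - 1) / (2 λ)` of `q(u) = D`, so `T(s) ≤ D ↔ T(s) ≤ T(s₀) ↔ s₀ ≤ s`.
-/

open Real Filter Set Topology

noncomputable def chunkTime (W lam tC s : ℝ) : ℝ := (W / s + tC) * (1 + lam * (W / s + tC))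

lemma strictMonoOn_mul_one_add_mul {lam : ℝ} (hlam : 0 ≤ lam) :
    StrictMonoOn (fun u : ℝ => u * (1 + lam * u)) (Ici 0) := by
  intro a ha b _ hab
  simp only [mem_Ici] at ha
  nlinarith [mul_nonneg hlam (add_nonneg ha (ha.trans hab.le))]

lemma mul_one_add_mul_positiveRoot {lam D : ℝ} (hlam : 0 < lam) (hD : 0 ≤ D) :
    let u := (√(4 * lam * D + 1) - 1) / (2 * lam)
    u * (1 + lam * u) = D := by
  have hsq : √(4 * lam * D + 1) ^ 2 = 4 * lam * D + 1 := sq_sqrt (by positivity)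
  field_simp
  linear_combination hsq

section chunkTime

variable {W lam tC : ℝ}

lemma strictAntiOn_div_add (hW : 0 < W) :
    StrictAntiOn (fun s : ℝ => W / s + tC) (Ioi 0) := fun _ ha _ _ hab =>
  add_lt_add_left (div_lt_div_of_pos_left hW ha hab) tC

lemma chunkTime_strictAntiOn (hW : 0 < W) (hlam : 0 ≤ lam) (htC : 0 ≤ tC) :
    StrictAntiOn (chunkTime W lam tC) (Ioi 0) :=
  (strictMonoOn_mul_one_add_mul hlam).comp_strictAntiOn (strictAntiOn_div_add hW)
    fun _ hs => mem_Ici.2 (add_nonneg (div_pos hW hs).le htC)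

lemma tendsto_chunkTime_atTop :
    Tendsto (chunkTime W lam tC) atTop (𝓝 (tC + lam * tC ^ 2)) := by
  have hu : Tendsto (fun s : ℝ => W / s + tC) atTop (𝓝 tC) := by
    simpa using (tendsto_const_nhds.div_atTop tendsto_id).add_const tC
  have hq : Continuous fun u : ℝ => u * (1 + lam * u) := by fun_prop
  rw [show tC + lam * tC ^ 2 = tC * (1 + lam * tC) by ring]
  exact (hq.tendsto tC).comp hu

lemma lt_chunkTime (hW : 0 < W) (hlam : 0 ≤ lam) (htC : 0 ≤ tC) {s : ℝ} (hs : 0 < s) :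
    tC + lam * tC ^ 2 < chunkTime W lam tC s := by
  have h := strictMonoOn_mul_one_add_mul hlam (mem_Ici.2 htC)
    (mem_Ici.2 (add_nonneg (div_pos hW hs).le htC)) (lt_add_of_pos_left tC (div_pos hW hs))
  simp only at h
  unfold chunkTime
  linarith

noncomputable def speedThreshold (W lam tC D : ℝ) : ℝ :=
  W * (1 + 2 * lam * tC + √(4 * lam * D + 1)) / (2 * (D - tC * (1 + lam * tC)))

variable {D : ℝ}

lemma speedThreshold_pos (hW : 0 < W) (hlam : 0 ≤ lam) (htC : 0 ≤ tC)
    (hD : tC + lam * tC ^ 2 < D) : 0 < speedThreshold W lam tC D := by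
  have : 0 < D - tC * (1 + lam * tC) := by linarith
  unfold speedThreshold
  positivity

lemma div_speedThreshold_add (hW : 0 < W) (hlam : 0 < lam) (htC : 0 ≤ tC)
    (hD : tC + lam * tC ^ 2 < D) :
    W / speedThreshold W lam tC D + tC = (√(4 * lam * D + 1) - 1) / (2 * lam) := by
  have hD0 : 0 ≤ D := (by positivity : 0 ≤ tC + lam * tC ^ 2).trans hD.le
  unfold speedThreshold
  set r := √(4 * lam * D + 1)
  have hsq : r ^ 2 = 4 * lam * D + 1 := sq_sqrt (by positivity)
  have hE : 0 < D - tC * (1 + lam * tC) := by linarith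
  have hc : 0 < 1 + 2 * lam * tC + r := by positivity
  field_simp
  -- rationalise: `(r - 1 - 2λt_C)(r + 1 + 2λt_C) = 4λ(D - t_C(1 + λt_C))` for `r = √(4λD + 1)`
  linear_combination -hsq

lemma chunkTime_speedThreshold (hW : 0 < W) (hlam : 0 < lam) (htC : 0 ≤ tC)
    (hD : tC + lam * tC ^ 2 < D) : chunkTime W lam tC (speedThreshold W lam tC D) = D := by
  rw [chunkTime, div_speedThreshold_add hW hlam htC hD]
  exact mul_one_add_mul_positiveRoot hlam ((by positivity : 0 ≤ tC + lam * tC ^ 2).trans hD.le)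

end chunkTime

theorem stmt_2_general (W lam tC D : ℝ) (hW : 0 < W) (hlam : 0 < lam) (htC : 0 ≤ tC) :
    StrictAntiOn (fun s : ℝ => (W / s + tC) * (1 + lam * (W / s + tC)))
      (Set.Ioi (0 : ℝ)) ∧
    Tendsto (fun s : ℝ => (W / s + tC) * (1 + lam * (W / s + tC))) atTop
      (nhds (tC + lam * tC ^ 2)) ∧
    (D ≤ tC + lam * tC ^ 2 →
      ¬ ∃ s : ℝ, 0 < s ∧ (W / s + tC) * (1 + lam * (W / s + tC)) ≤ D) ∧
    (tC + lam * tC ^ 2 < D →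
      ∀ s0 : ℝ, s0 = W * (1 + 2 * lam * tC + Real.sqrt (4 * lam * D + 1)) /
          (2 * (D - tC * (1 + lam * tC))) →
        (∀ s : ℝ, 0 < s →
          ((W / s + tC) * (1 + lam * (W / s + tC)) ≤ D ↔ s0 ≤ s)) ∧
        (W / s0 + tC) * (1 + lam * (W / s0 + tC)) = D) := by
  have hanti := chunkTime_strictAntiOn hW hlam.le htC
  refine ⟨hanti, tendsto_chunkTime_atTop, ?_, ?_⟩
  · rintro hD ⟨s, hs, hT⟩
    exact (lt_chunkTime hW hlam.le htC hs).not_ge (hT.trans hD)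
  · rintro hD s0 rfl
    have hT0 := chunkTime_speedThreshold hW hlam htC hD
    refine ⟨fun s hs => ?_, hT0⟩
    conv_lhs => rw [← hT0]
    exact hanti.le_iff_ge hs (speedThreshold_pos hW hlam.le htC hD)

/-- The expected execution time `T(s) = (W/s + t_C)(1 + λ (W/s + t_C))`
is strictly decreasing on `(0, ∞)` and tends to `t_C + λ t_C²` at `+∞`; if
`D ≤ t_C + λ t_C²` no speed meets the deadline; otherwise `T(s) ≤ D ↔ s ≥ s₀` with
`s₀ = W (1 + 2 λ t_C + √(4 λ D + 1)) / (2 (D − t_C (1 + λ t_C)))` and `T(s₀) = D`. -/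
theorem stmt_2 (W lam tC D : ℝ) (hW : 0 < W) (hlam : 0 < lam) (htC : 0 ≤ tC)
    (hD : 0 < D) :
    StrictAntiOn (fun s : ℝ => (W / s + tC) * (1 + lam * (W / s + tC)))
      (Set.Ioi (0 : ℝ)) ∧
    Tendsto (fun s : ℝ => (W / s + tC) * (1 + lam * (W / s + tC))) atTop
      (nhds (tC + lam * tC ^ 2)) ∧
    (D ≤ tC + lam * tC ^ 2 →
      ¬ ∃ s : ℝ, 0 < s ∧ (W / s + tC) * (1 + lam * (W / s + tC)) ≤ D) ∧
    (tC + lam * tC ^ 2 < D →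
      ∀ s0 : ℝ, s0 = W * (1 + 2 * lam * tC + Real.sqrt (4 * lam * D + 1)) /
          (2 * (D - tC * (1 + lam * tC))) →
        (∀ s : ℝ, 0 < s →
          ((W / s + tC) * (1 + lam * (W / s + tC)) ≤ D ↔ s0 ≤ s)) ∧
        (W / s0 + tC) * (1 + lam * (W / s0 + tC)) = D) :=
  stmt_2_general W lam tC D hW hlam htC
end

section
/- Let W > 0, λ > 0, t_C ≥ 0, E_C > 0 and D > 2·t_C be real constants. Let E(s) = (W·s² + E_C)·(1 + λ·(W/s + t_C)) and let s* be the unique minimizer of E on (0, ∞). Then sₒₚₜ = max(s*, W/(D/2 − t_C)) satisfies the hard-deadline constraint 2·(W/sₒₚₜ + t_C) ≤ D, and for every s > 0 with 2·(W/s + t_C) ≤ D one has E(sₒₚₜ) ≤ E(s). Moreover, if D ≤ 2·t_C, there is no s > 0 with 2·(W/s + t_C) ≤ D. -/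
open Real Set

private lemma conv_aux (W lam tC EC : ℝ) (hW : 0 < W) (hlam : 0 < lam) (htC : 0 ≤ tC)
    (hEC : 0 < EC) (x a b : ℝ) (hx : 0 < x) (hxa : x ≤ a) (hab : a ≤ b) :
    (b - x) * ((W * a ^ 2 + EC) * (1 + lam * (W / a + tC))) ≤
      (b - a) * ((W * x ^ 2 + EC) * (1 + lam * (W / x + tC))) +
        (a - x) * ((W * b ^ 2 + EC) * (1 + lam * (W / b + tC))) := by
  have ha : 0 < a := lt_of_lt_of_le hx hxa
  have hb : 0 < b := lt_of_lt_of_le ha hab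
  have key : (b - a) * ((W * x ^ 2 + EC) * (1 + lam * (W / x + tC))) +
        (a - x) * ((W * b ^ 2 + EC) * (1 + lam * (W / b + tC))) -
      (b - x) * ((W * a ^ 2 + EC) * (1 + lam * (W / a + tC))) =
      (1 + lam * tC) * W * ((a - x) * (b - a) * (b - x)) +
        lam * W * EC * (((a - x) * (b - x) * (b - a)) / (x * a * b)) := by
    field_simp
    ring
  have h1 : 0 ≤ (1 + lam * tC) * W * ((a - x) * (b - a) * (b - x)) := by
    have : (0:ℝ) < 1 + lam * tC := by positivity
    have := mul_nonneg (mul_nonneg (sub_nonneg.2 hxa) (sub_nonneg.2 hab))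
      (sub_nonneg.2 (hxa.trans hab))
    positivity
  have h2 : 0 ≤ lam * W * EC * (((a - x) * (b - x) * (b - a)) / (x * a * b)) := by
    have := mul_nonneg (mul_nonneg (sub_nonneg.2 hxa) (sub_nonneg.2 (hxa.trans hab)))
      (sub_nonneg.2 hab)
    positivity
  linarith

/-- Single chunk, single speed, hard deadline. With `s*` the unique
minimizer of the expected energy `E` on `(0, ∞)`: if `D > 2 t_C`, then
`sₒₚₜ = max(s*, W/(D/2 − t_C))` satisfies the hard-deadline constraint
`2 (W/sₒₚₜ + t_C) ≤ D` and minimizes `E` among speeds meeting it; moreover, if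
`D ≤ 2 t_C`, then no positive speed meets the constraint. -/
theorem stmt_4 (W lam tC EC D : ℝ) (hW : 0 < W) (hlam : 0 < lam) (htC : 0 ≤ tC)
    (hEC : 0 < EC)
    (sstar : ℝ) (hsstar : 0 < sstar)
    (hmin : ∀ s : ℝ, 0 < s →
      (W * sstar ^ 2 + EC) * (1 + lam * (W / sstar + tC)) ≤
        (W * s ^ 2 + EC) * (1 + lam * (W / s + tC)))
    (huniq : ∀ s : ℝ, 0 < s →
      (∀ t : ℝ, 0 < t →
        (W * s ^ 2 + EC) * (1 + lam * (W / s + tC)) ≤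
          (W * t ^ 2 + EC) * (1 + lam * (W / t + tC))) → s = sstar) :
    (2 * tC < D →
      ∀ sopt : ℝ, sopt = max sstar (W / (D / 2 - tC)) →
        2 * (W / sopt + tC) ≤ D ∧
        ∀ s : ℝ, 0 < s → 2 * (W / s + tC) ≤ D →
          (W * sopt ^ 2 + EC) * (1 + lam * (W / sopt + tC)) ≤
            (W * s ^ 2 + EC) * (1 + lam * (W / s + tC))) ∧
    (D ≤ 2 * tC → ¬ ∃ s : ℝ, 0 < s ∧ 2 * (W / s + tC) ≤ D) := by
  -- monotonicity right of sstar
  have mono : ∀ a b : ℝ, sstar ≤ a → a ≤ b →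
      (W * a ^ 2 + EC) * (1 + lam * (W / a + tC)) ≤
        (W * b ^ 2 + EC) * (1 + lam * (W / b + tC)) := by
    intro a b hsa hab
    have ha : 0 < a := lt_of_lt_of_le hsstar hsa
    have hb : 0 < b := lt_of_lt_of_le ha hab
    rcases eq_or_lt_of_le hsa with h | h
    · subst h
      exact hmin b hb
    · have hconv := conv_aux W lam tC EC hW hlam htC hEC sstar a b hsstar hsa hab
      have hm := hmin a ha
      nlinarith [hm, hconv, sub_pos.2 h]
  constructor
  · intro hD sopt hsopt
    have hden : 0 < D / 2 - tC := by linarith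
    have hc : 0 < W / (D / 2 - tC) := div_pos hW hden
    have hsoptpos : 0 < sopt := by
      rw [hsopt]; exact lt_max_of_lt_right hc
    have hge : W / (D / 2 - tC) ≤ sopt := by rw [hsopt]; exact le_max_right _ _
    have hWsopt : W / sopt ≤ D / 2 - tC := by
      rw [div_le_iff₀ hsoptpos]
      rw [div_le_iff₀ hden] at hge
      linarith [hge]
    constructor
    · linarith
    · intro s hs hsfeas
      have hWs : W / s ≤ D / 2 - tC := by linarith
      have hsge : W / (D / 2 - tC) ≤ s := by
        rw [div_le_iff₀ hden]
        rw [div_le_iff₀ hs] at hWs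
        linarith
      rcases le_total sstar (W / (D / 2 - tC)) with h | h
      · have hsopt' : sopt = W / (D / 2 - tC) := by rw [hsopt, max_eq_right h]
        rw [hsopt']
        exact mono _ _ h (hsopt' ▸ hsge)
      · have hsopt' : sopt = sstar := by rw [hsopt, max_eq_left h]
        rw [hsopt']
        exact hmin s hs
  · intro hD ⟨s, hs, hfeas⟩
    have : 0 < W / s := div_pos hW hs
    linarith
end

section
/- Let n ≥ 1 be an integer, let α : Fin n → ℝ with αᵢ > 0 for all i, let T₀ and D be reals with T₀ < D, and let S = Σᵢ αᵢ. Set σ* = S/(D − T₀). Then the assignment σᵢ = σ* for all i satisfies T₀ + Σᵢ αᵢ/σᵢ = D, and for every σ : Fin n → ℝ with σᵢ > 0 for all i and T₀ + Σᵢ αᵢ/σᵢ ≤ D, one has Σᵢ αᵢ·(σ*)² ≤ Σᵢ αᵢ·σᵢ², with equality if and only if σᵢ = σ* for all i. -/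
/-!
Energy is convex and time is decreasing in each speed, so the optimum uses one common speed `s`
that exactly meets the deadline. Concretely, the tangent-type bound `x² + 2s³/x ≥ 3s²`
(with equality only at `x = s`) gives, after weighting by `αᵢ` and summing,
`Σ αᵢ σᵢ² ≥ 3s² Σ αᵢ - 2s³ Σ αᵢ/σᵢ ≥ 3s² Σ αᵢ - 2s³ Σ αᵢ/s = s² Σ αᵢ`
whenever the speeds `σ` take no more time than the constant speed `s`.
-/

open Finset

lemma sq_add_two_mul_pow_three_div_sub {x s : ℝ} (hx : x ≠ 0) :
    x ^ 2 + 2 * s ^ 3 / x - 3 * s ^ 2 = (x - s) ^ 2 * (x + 2 * s) / x := by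
  field_simp
  ring

lemma three_mul_sq_le_sq_add_two_mul_pow_three_div {x s : ℝ} (hx : 0 < x) (hs : 0 ≤ s) :
    3 * s ^ 2 ≤ x ^ 2 + 2 * s ^ 3 / x := by
  have := sq_add_two_mul_pow_three_div_sub (s := s) hx.ne'
  have : 0 ≤ (x - s) ^ 2 * (x + 2 * s) / x := by positivity
  linarith

lemma sq_add_two_mul_pow_three_div_eq_iff {x s : ℝ} (hx : 0 < x) (hs : 0 ≤ s) :
    x ^ 2 + 2 * s ^ 3 / x = 3 * s ^ 2 ↔ x = s := by
  rw [← sub_eq_zero, sq_add_two_mul_pow_three_div_sub hx.ne', div_eq_zero_iff,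
    mul_eq_zero, sq_eq_zero_iff, sub_eq_zero]
  constructor
  · rintro ((h | h) | h) <;> first | exact h | linarith
  · exact fun h => Or.inl (Or.inl h)

section WeightedSpeeds

variable {ι : Type*} {t : Finset ι} {α σ : ι → ℝ} {s : ℝ}

lemma sum_mul_sq_add_two_mul_pow_three_div_ge (hα : ∀ i ∈ t, 0 < α i) (hσ : ∀ i ∈ t, 0 < σ i)
    (hs : 0 ≤ s) :
    3 * s ^ 2 * ∑ i ∈ t, α i ≤ ∑ i ∈ t, α i * (σ i ^ 2 + 2 * s ^ 3 / σ i) ∧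
      (3 * s ^ 2 * ∑ i ∈ t, α i = ∑ i ∈ t, α i * (σ i ^ 2 + 2 * s ^ 3 / σ i) ↔
        ∀ i ∈ t, σ i = s) := by
  have hterm : ∀ i ∈ t, α i * (3 * s ^ 2) ≤ α i * (σ i ^ 2 + 2 * s ^ 3 / σ i) := fun i hi =>
    mul_le_mul_of_nonneg_left (three_mul_sq_le_sq_add_two_mul_pow_three_div (hσ i hi) hs)
      (hα i hi).le
  rw [mul_sum]
  simp_rw [mul_comm (3 * s ^ 2)]
  refine ⟨sum_le_sum hterm, (sum_eq_sum_iff_of_le hterm).trans (forall₂_congr fun i hi => ?_)⟩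
  rw [mul_right_inj' (hα i hi).ne', eq_comm, sq_add_two_mul_pow_three_div_eq_iff (hσ i hi) hs]

theorem sum_mul_sq_le_of_sum_div_le (hα : ∀ i ∈ t, 0 < α i) (hσ : ∀ i ∈ t, 0 < σ i)
    (hs : 0 < s) (htime : ∑ i ∈ t, α i / σ i ≤ ∑ i ∈ t, α i / s) :
    ∑ i ∈ t, α i * s ^ 2 ≤ ∑ i ∈ t, α i * σ i ^ 2 ∧
      (∑ i ∈ t, α i * s ^ 2 = ∑ i ∈ t, α i * σ i ^ 2 ↔ ∀ i ∈ t, σ i = s) := by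
  obtain ⟨hle, heq_iff⟩ := sum_mul_sq_add_two_mul_pow_three_div_ge hα hσ hs.le
  have hsplit : ∑ i ∈ t, α i * (σ i ^ 2 + 2 * s ^ 3 / σ i)
      = ∑ i ∈ t, α i * σ i ^ 2 + 2 * s ^ 3 * ∑ i ∈ t, α i / σ i := by
    rw [mul_sum, ← sum_add_distrib]
    exact sum_congr rfl fun i _ => by ring
  have hconst : ∑ i ∈ t, α i * s ^ 2 = s ^ 2 * ∑ i ∈ t, α i := by
    rw [mul_sum]
    exact sum_congr rfl fun i _ => mul_comm _ _
  have hbudget : 2 * s ^ 3 * ∑ i ∈ t, α i / σ i ≤ 2 * s ^ 2 * ∑ i ∈ t, α i := by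
    calc 2 * s ^ 3 * ∑ i ∈ t, α i / σ i ≤ 2 * s ^ 3 * ∑ i ∈ t, α i / s := by gcongr
      _ = 2 * s ^ 2 * ∑ i ∈ t, α i := by rw [← sum_div]; field_simp
  refine ⟨by linarith, ⟨fun h => heq_iff.mp (by linarith), fun h => ?_⟩⟩
  exact sum_congr rfl fun i hi => by rw [h i hi]

end WeightedSpeeds

/-- All re-execution speeds equal and deadline tight. With `αᵢ > 0`,
`T₀ < D`, `S = Σᵢ αᵢ` and `σ* = S/(D − T₀)`: the constant assignment `σᵢ = σ*`
makes the deadline tight, and for every positive `σ` meeting the deadline,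
`Σᵢ αᵢ σ*² ≤ Σᵢ αᵢ σᵢ²`, with equality iff `σᵢ = σ*` for all `i`. -/
theorem stmt_7 (n : ℕ) (hn : 1 ≤ n) (α : Fin n → ℝ) (hα : ∀ i, 0 < α i)
    (T0 D : ℝ) (hTD : T0 < D) (σstar : ℝ)
    (hσstar : σstar = (∑ i, α i) / (D - T0)) :
    T0 + ∑ i, α i / σstar = D ∧
    ∀ σ : Fin n → ℝ, (∀ i, 0 < σ i) → T0 + ∑ i, α i / σ i ≤ D →
      ∑ i, α i * σstar ^ 2 ≤ ∑ i, α i * (σ i) ^ 2 ∧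
      (∑ i, α i * σstar ^ 2 = ∑ i, α i * (σ i) ^ 2 ↔ ∀ i, σ i = σstar) := by
  have hgap : 0 < D - T0 := sub_pos.mpr hTD
  have : Nonempty (Fin n) := ⟨⟨0, hn⟩⟩
  have hS : 0 < ∑ i, α i := sum_pos (fun i _ => hα i) univ_nonempty
  have hσstar_pos : 0 < σstar := hσstar ▸ div_pos hS hgap
  have htight : ∑ i, α i / σstar = D - T0 := by
    rw [← sum_div, hσstar]
    field_simp
  refine ⟨by rw [htight]; ring, fun σ hσ hdeadline => ?_⟩
  obtain ⟨hle, heq_iff⟩ := sum_mul_sq_le_of_sum_div_le (fun i _ => hα i) (fun i _ => hσ i)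
    hσstar_pos (htight ▸ le_sub_iff_add_le'.mpr hdeadline)
  exact ⟨hle, heq_iff.trans (by simp)⟩
end

section
/- Let u₁, u₂, w₁, w₂, C be positive real constants. Suppose σ₁ > 0 and σ₂ > 0 satisfy w₁/σ₁ + w₂/σ₂ = C and minimize the function (τ₁, τ₂) ↦ u₁·w₁·τ₁² + u₂·w₂·τ₂² over all pairs (τ₁, τ₂) of positive reals with w₁/τ₁ + w₂/τ₂ = C. Then u₁·σ₁³ = u₂·σ₂³. -/
/-!
At the optimum the Lagrange condition holds for the cost `u₁ w₁ τ₁² + u₂ w₂ τ₂²` and the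
budget `w₁/τ₁ + w₂/τ₂`: the gradients `(2 u₁ w₁ σ₁, 2 u₂ w₂ σ₂)` and `(-w₁/σ₁², -w₂/σ₂²)` are
parallel, and cross-multiplying gives `u₁ σ₁³ = u₂ σ₂³`. The positivity constraints are open,
so a minimizer over the feasible positive pairs is a local minimizer on the budget curve.
-/

open Filter Topology Set

/-- Lagrange multipliers for a separable objective and a separable constraint. -/
theorem mul_eq_mul_of_isLocalExtrOn_separable {f₁ f₂ g₁ g₂ : ℝ → ℝ} {f₁' f₂' g₁' g₂' x y : ℝ}
    (hf₁ : HasStrictDerivAt f₁ f₁' x) (hf₂ : HasStrictDerivAt f₂ f₂' y)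
    (hg₁ : HasStrictDerivAt g₁ g₁' x) (hg₂ : HasStrictDerivAt g₂ g₂' y)
    (hextr : IsLocalExtrOn (fun p : ℝ × ℝ => f₁ p.1 + f₂ p.2)
      {p | g₁ p.1 + g₂ p.2 = g₁ x + g₂ y} (x, y)) :
    f₁' * g₂' = f₂' * g₁' := by
  have hsep : ∀ {h₁ h₂ : ℝ → ℝ} {h₁' h₂' : ℝ}, HasStrictDerivAt h₁ h₁' x →
      HasStrictDerivAt h₂ h₂' y → HasStrictFDerivAt (fun p : ℝ × ℝ => h₁ p.1 + h₂ p.2)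
        (h₁' • ContinuousLinearMap.fst ℝ ℝ ℝ + h₂' • ContinuousLinearMap.snd ℝ ℝ ℝ) (x, y) :=
    fun h₁ h₂ => (h₁.comp_hasStrictFDerivAt (x, y) (hasStrictFDerivAt_fst (p := (x, y)))).add
      (h₂.comp_hasStrictFDerivAt (x, y) (hasStrictFDerivAt_snd (p := (x, y))))
  obtain ⟨a, b, hab, hzero⟩ :=
    hextr.exists_multipliers_of_hasStrictFDerivAt_1d (hsep hg₁ hg₂) (hsep hf₁ hf₂)
  have h₁ : a * g₁' + b * f₁' = 0 := by simpa using congr($hzero (1, 0))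
  have h₂ : a * g₂' + b * f₂' = 0 := by simpa using congr($hzero (0, 1))
  have ha : a * (f₁' * g₂' - f₂' * g₁') = 0 := by linear_combination f₁' * h₂ - f₂' * h₁
  have hb : b * (f₁' * g₂' - f₂' * g₁') = 0 := by linear_combination g₂' * h₁ - g₁' * h₂
  refine sub_eq_zero.1 (by_contra fun hne => hab ?_)
  exact Prod.ext ((mul_eq_zero.1 ha).resolve_right hne) ((mul_eq_zero.1 hb).resolve_right hne)

theorem hasStrictDerivAt_const_mul_sq (c x : ℝ) :
    HasStrictDerivAt (fun y => c * y ^ 2) (c * (2 * x)) x := by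
  simpa using (hasStrictDerivAt_pow 2 x).const_mul c

theorem hasStrictDerivAt_const_div (c : ℝ) {x : ℝ} (hx : x ≠ 0) :
    HasStrictDerivAt (fun y => c / y) (-c / x ^ 2) x := by
  simpa [div_eq_mul_inv] using (hasStrictDerivAt_inv hx).const_mul c

theorem stmt_8_general (u1 u2 w1 w2 C σ1 σ2 : ℝ)
    (hw1 : 0 < w1) (hw2 : 0 < w2)
    (hσ1 : 0 < σ1) (hσ2 : 0 < σ2)
    (hfeas : w1 / σ1 + w2 / σ2 = C)
    (hmin : ∀ τ1 τ2 : ℝ, 0 < τ1 → 0 < τ2 → w1 / τ1 + w2 / τ2 = C →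
      u1 * w1 * σ1 ^ 2 + u2 * w2 * σ2 ^ 2 ≤ u1 * w1 * τ1 ^ 2 + u2 * w2 * τ2 ^ 2) :
    u1 * σ1 ^ 3 = u2 * σ2 ^ 3 := by
  have hlocal : IsLocalMinOn (fun p : ℝ × ℝ => u1 * w1 * p.1 ^ 2 + u2 * w2 * p.2 ^ 2)
      {p | w1 / p.1 + w2 / p.2 = w1 / σ1 + w2 / σ2} (σ1, σ2) := by
    have hquadrant : Ioi 0 ×ˢ Ioi 0 ∈ 𝓝 (σ1, σ2) :=
      (isOpen_Ioi.prod isOpen_Ioi).mem_nhds ⟨hσ1, hσ2⟩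
    filter_upwards [self_mem_nhdsWithin, nhdsWithin_le_nhds hquadrant] with p hp ⟨hp1, hp2⟩
    exact hmin p.1 p.2 hp1 hp2 (hp.trans hfeas)
  have hlagrange := mul_eq_mul_of_isLocalExtrOn_separable
    (hasStrictDerivAt_const_mul_sq (u1 * w1) σ1) (hasStrictDerivAt_const_mul_sq (u2 * w2) σ2)
    (hasStrictDerivAt_const_div w1 hσ1.ne') (hasStrictDerivAt_const_div w2 hσ2.ne') (.inl hlocal)
  field_simp at hlagrange
  linear_combination -hlagrange

/-- If `(σ₁, σ₂)` satisfies the tight time budget `w₁/σ₁ + w₂/σ₂ = C`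
and minimizes `u₁ w₁ τ₁² + u₂ w₂ τ₂²` over all positive pairs `(τ₁, τ₂)` with
`w₁/τ₁ + w₂/τ₂ = C`, then `u₁ σ₁³ = u₂ σ₂³`. -/
theorem stmt_8 (u1 u2 w1 w2 C σ1 σ2 : ℝ) (hu1 : 0 < u1) (hu2 : 0 < u2)
    (hw1 : 0 < w1) (hw2 : 0 < w2) (hC : 0 < C)
    (hσ1 : 0 < σ1) (hσ2 : 0 < σ2)
    (hfeas : w1 / σ1 + w2 / σ2 = C)
    (hmin : ∀ τ1 τ2 : ℝ, 0 < τ1 → 0 < τ2 → w1 / τ1 + w2 / τ2 = C →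
      u1 * w1 * σ1 ^ 2 + u2 * w2 * σ2 ^ 2 ≤ u1 * w1 * τ1 ^ 2 + u2 * w2 * τ2 ^ 2) :
    u1 * σ1 ^ 3 = u2 * σ2 ^ 3 :=
  stmt_8_general u1 u2 w1 w2 C σ1 σ2 hw1 hw2 hσ1 hσ2 hfeas hmin
end

section
/- Let λ > 0, t_C ≥ 0, E_C ≥ 0 and let w₁, w₂, s₁, s₂ be positive reals with w₁/s₁ ≥ w₂/s₂ and (s₁, w₁) ≠ (s₂, w₂). Define w = (w₁ + w₂)/2 and s = s_A = (w₁ + w₂)/(w₁/s₁ + w₂/s₂). For a chunk of size ω executed and re-executed at speed v let T(ω, v) = (ω/v + t_C) + λ·(ω/v + t_C)² and E(ω, v) = (ω·v² + E_C)·(1 + λ·(ω/v + t_C)). Then 2·T(w, s) ≤ T(w₁, s₁) + T(w₂, s₂) and 2·E(w, s) < E(w₁, s₁) + E(w₂, s₂). -/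
/-!
Write each chunk through its duration `d = ω / v` and speed `v`, so that `ω = d v`,
`T = g(d)` with `g(d) = (d + t_C) + λ (d + t_C)²`, and
`E = d v³ (c + λ d) + E_C (c + λ d)` with `c = 1 + λ t_C`. The two equal chunks have
duration `(d₁ + d₂)/2` each and speed `s_A = (d₁ s₁ + d₂ s₂)/(d₁ + d₂)`, the
duration-weighted mean of `s₁, s₂`. The time claim is convexity of `g`, and the `E_C`
part of the energy is affine in `d`, hence unchanged. The remaining part splits into
`c` times a Jensen gap for `v ↦ v³` (positive when `s₁ ≠ s₂`) and `λ` times a Hölder gap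
`2 (d₁ + d₂)(d₁² s₁³ + d₂² s₂³) - (d₁ s₁ + d₂ s₂)³`, which is nonnegative by AM-GM and
positive when `s₁ = s₂` but `d₁ ≠ d₂`.
-/

lemma three_mul_le_add_add_of_pow_three_eq {t p q r : ℝ} (ht : 0 ≤ t) (hp : 0 ≤ p)
    (hq : 0 ≤ q) (hr : 0 ≤ r) (h : t ^ 3 = p * q * r) : 3 * t ≤ p + q + r := by
  have hthird : (0 : ℝ) ≤ 1 / 3 := by norm_num
  have hamgm := Real.geom_mean_le_arith_mean3_weighted hthird hthird hthird hp hq hr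
    (by norm_num)
  have hgeom : p ^ ((1 : ℝ) / 3) * q ^ ((1 : ℝ) / 3) * r ^ ((1 : ℝ) / 3) = t := by
    rw [← Real.mul_rpow hp hq, ← Real.mul_rpow (mul_nonneg hp hq) hr, ← h,
      ← Real.rpow_natCast t 3, ← Real.rpow_mul ht]
    norm_num
  linarith

lemma mul_add_mul_pow_three_le_two_mul {a b x y : ℝ} (ha : 0 ≤ a) (hb : 0 ≤ b)
    (hx : 0 ≤ x) (hy : 0 ≤ y) :
    (a * x + b * y) ^ 3 ≤ 2 * (a + b) * (a ^ 2 * x ^ 3 + b ^ 2 * y ^ 3) := by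
  have hxxy := three_mul_le_add_add_of_pow_three_eq (t := a ^ 2 * b * x ^ 2 * y)
    (p := a ^ 3 * x ^ 3) (q := a ^ 2 * b * x ^ 3) (r := a * b ^ 2 * y ^ 3)
    (by positivity) (by positivity) (by positivity) (by positivity) (by ring)
  have hxyy := three_mul_le_add_add_of_pow_three_eq (t := a * b ^ 2 * x * y ^ 2)
    (p := b ^ 3 * y ^ 3) (q := a * b ^ 2 * y ^ 3) (r := a ^ 2 * b * x ^ 3)
    (by positivity) (by positivity) (by positivity) (by positivity) (by ring)
  linarith

lemma mul_add_mul_pow_three_lt_sq_mul {a b x y : ℝ} (ha : 0 < a) (hb : 0 < b)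
    (hx : 0 ≤ x) (hy : 0 ≤ y) (hxy : x ≠ y) :
    (a * x + b * y) ^ 3 < (a + b) ^ 2 * (a * x ^ 3 + b * y ^ 3) := by
  have hgap : (a + b) ^ 2 * (a * x ^ 3 + b * y ^ 3) - (a * x + b * y) ^ 3
      = a * b * (x - y) ^ 2 * (a * (2 * x + y) + b * (x + 2 * y)) := by ring
  have hsum : 0 < x + y := by
    by_contra! h
    exact hxy (by linarith)
  have hweights : 0 < a * (2 * x + y) + b * (x + 2 * y) := by
    nlinarith [mul_pos ha hsum, mul_pos hb hsum]
  have hsq : 0 < (x - y) ^ 2 := sq_pos_of_ne_zero (sub_ne_zero.2 hxy)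
  linarith [mul_pos (mul_pos (mul_pos ha hb) hsq) hweights]

lemma equalized_energy_lt {c lam a b x y : ℝ} (hc : 0 < c) (hlam : 0 < lam)
    (ha : 0 < a) (hb : 0 < b) (hx : 0 < x) (hy : 0 < y) (hne : a ≠ b ∨ x ≠ y) :
    2 * ((a + b) / 2 * ((a * x + b * y) / (a + b)) ^ 3 * (c + lam * ((a + b) / 2)))
      < a * x ^ 3 * (c + lam * a) + b * y ^ 3 * (c + lam * b) := by
  have hab : 0 < a + b := by linarith
  have hK : 0 < lam * (a + b) / 2 := by positivity
  rw [← mul_lt_mul_iff_of_pos_left (pow_pos hab 2)]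
  have hlhs : (a + b) ^ 2 * (2 * ((a + b) / 2 * ((a * x + b * y) / (a + b)) ^ 3
      * (c + lam * ((a + b) / 2))))
      = c * (a * x + b * y) ^ 3 + lam * (a + b) / 2 * (a * x + b * y) ^ 3 := by
    field_simp
  have hrhs : (a + b) ^ 2 * (a * x ^ 3 * (c + lam * a) + b * y ^ 3 * (c + lam * b))
      = c * ((a + b) ^ 2 * (a * x ^ 3 + b * y ^ 3))
        + lam * (a + b) / 2 * (2 * (a + b) * (a ^ 2 * x ^ 3 + b ^ 2 * y ^ 3)) := by
    ring
  rw [hlhs, hrhs]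
  rcases eq_or_ne x y with rfl | hxy
  · have hab' : a - b ≠ 0 := sub_ne_zero.2 (hne.resolve_right (not_not.2 rfl))
    have hjensen : (a * x + b * x) ^ 3 = (a + b) ^ 2 * (a * x ^ 3 + b * x ^ 3) := by ring
    have hholder : (a * x + b * x) ^ 3 < 2 * (a + b) * (a ^ 2 * x ^ 3 + b ^ 2 * x ^ 3) := by
      have hgap : 2 * (a + b) * (a ^ 2 * x ^ 3 + b ^ 2 * x ^ 3) - (a * x + b * x) ^ 3
          = x ^ 3 * (a + b) * (a - b) ^ 2 := by ring
      have : 0 < x ^ 3 * (a + b) * (a - b) ^ 2 := by positivity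
      linarith
    rw [hjensen] at hholder ⊢
    linarith [mul_lt_mul_of_pos_left hholder hK]
  · exact add_lt_add_of_lt_of_le
      (mul_lt_mul_of_pos_left (mul_add_mul_pow_three_lt_sq_mul ha hb hx.le hy.le hxy) hc)
      (mul_le_mul_of_nonneg_left
        (mul_add_mul_pow_three_le_two_mul ha.le hb.le hx.le hy.le) hK.le)

theorem stmt_12_general (lam tC EC w1 w2 s1 s2 : ℝ) (hlam : 0 < lam) (htC : 0 ≤ tC)
    (hw1 : 0 < w1) (hw2 : 0 < w2) (hs1 : 0 < s1) (hs2 : 0 < s2)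
    (hne : (s1, w1) ≠ (s2, w2))
    (w s : ℝ) (hw : w = (w1 + w2) / 2) (hs : s = (w1 + w2) / (w1 / s1 + w2 / s2))
    (T E : ℝ → ℝ → ℝ)
    (hT : ∀ ω v : ℝ, T ω v = (ω / v + tC) + lam * (ω / v + tC) ^ 2)
    (hE : ∀ ω v : ℝ, E ω v = (ω * v ^ 2 + EC) * (1 + lam * (ω / v + tC))) :
    2 * T w s ≤ T w1 s1 + T w2 s2 ∧ 2 * E w s < E w1 s1 + E w2 s2 := by
  obtain ⟨a, ha, rfl⟩ : ∃ a, 0 < a ∧ w1 = a * s1 :=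
    ⟨w1 / s1, div_pos hw1 hs1, (div_mul_cancel₀ w1 hs1.ne').symm⟩
  obtain ⟨b, hb, rfl⟩ : ∃ b, 0 < b ∧ w2 = b * s2 :=
    ⟨w2 / s2, div_pos hw2 hs2, (div_mul_cancel₀ w2 hs2.ne').symm⟩
  have hs' : s = (a * s1 + b * s2) / (a + b) := by
    rw [hs, mul_div_cancel_right₀ a hs1.ne', mul_div_cancel_right₀ b hs2.ne']
  have hsw : 0 < s := by rw [hs']; positivity
  have hw' : w = (a + b) / 2 * s := by
    rw [hw, hs']
    field_simp
  have hT' : ∀ d v, v ≠ 0 → T (d * v) v = d + tC + lam * (d + tC) ^ 2 := by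
    intro d v hv
    rw [hT, mul_div_cancel_right₀ d hv]
  have hE' : ∀ d v, v ≠ 0 →
      E (d * v) v = d * v ^ 3 * (1 + lam * tC + lam * d) + EC * (1 + lam * (d + tC)) := by
    intro d v hv
    rw [hE, mul_div_cancel_right₀ d hv]
    ring
  rw [hw']
  refine ⟨?_, ?_⟩
  · rw [hT' _ _ hsw.ne', hT' _ _ hs1.ne', hT' _ _ hs2.ne']
    linarith [mul_nonneg hlam.le (sq_nonneg (a - b))]
  · have hne' : a ≠ b ∨ s1 ≠ s2 := by
      by_contra! h
      obtain ⟨hab, hs12⟩ := h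
      exact hne (by rw [hab, hs12])
    have hcore := equalized_energy_lt (c := 1 + lam * tC) (by positivity) hlam ha hb hs1 hs2 hne'
    rw [← hs'] at hcore
    rw [hE' _ _ hsw.ne', hE' _ _ hs1.ne', hE' _ _ hs2.ne']
    linarith

/-- Exchange argument for single-speed, expected-deadline. With
`T(ω, v) = (ω/v + t_C) + λ (ω/v + t_C)²` and
`E(ω, v) = (ω v² + E_C)(1 + λ (ω/v + t_C))`, replacing two unequal chunks
`(w₁, s₁), (w₂, s₂)` (with `w₁/s₁ ≥ w₂/s₂`) by two equal chunks of size
`w = (w₁+w₂)/2` at speed `s_A = (w₁+w₂)/(w₁/s₁ + w₂/s₂)` does not increase the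
expected time and strictly decreases the expected energy. -/
theorem stmt_12 (lam tC EC w1 w2 s1 s2 : ℝ) (hlam : 0 < lam) (htC : 0 ≤ tC)
    (hEC : 0 ≤ EC) (hw1 : 0 < w1) (hw2 : 0 < w2) (hs1 : 0 < s1) (hs2 : 0 < s2)
    (hord : w2 / s2 ≤ w1 / s1) (hne : (s1, w1) ≠ (s2, w2))
    (w s : ℝ) (hw : w = (w1 + w2) / 2) (hs : s = (w1 + w2) / (w1 / s1 + w2 / s2))
    (T E : ℝ → ℝ → ℝ)
    (hT : ∀ ω v : ℝ, T ω v = (ω / v + tC) + lam * (ω / v + tC) ^ 2)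
    (hE : ∀ ω v : ℝ, E ω v = (ω * v ^ 2 + EC) * (1 + lam * (ω / v + tC))) :
    2 * T w s ≤ T w1 s1 + T w2 s2 ∧ 2 * E w s < E w1 s1 + E w2 s2 :=
  stmt_12_general lam tC EC w1 w2 s1 s2 hlam htC hw1 hw2 hs1 hs2 hne w s hw hs T E hT hE
end

section
/- Let λ > 0, t_C ≥ 0, E_C ≥ 0 and let w₁, w₂, s₁, s₂ be positive reals with w₁/s₁ ≥ w₂/s₂ and (s₁, w₁) ≠ (s₂, w₂). Define w = (w₁ + w₂)/2 and s = s_A = (w₁ + w₂)/(w₁/s₁ + w₂/s₂). For a chunk of size ω executed and re-executed at speed v let T_wc(ω, v) = 2·(ω/v + t_C) and E(ω, v) = (ω·v² + E_C)·(1 + λ·(ω/v + t_C)). Then 2·T_wc(w, s) = T_wc(w₁, s₁) + T_wc(w₂, s₂) and 2·E(w, s) < E(w₁, s₁) + E(w₂, s₂). -/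
/-!
In the coordinates `(ω, t)`, with `t = ω / v` the execution time of a chunk, the worst-case time
`2 (t + t_C)` is affine and the expected energy
`(1 + λ t_C) ω³ / t² + λ ω³ / t + E_C (1 + λ (t + t_C))` is strictly convex on the positive
quadrant. The speed `s_A` is exactly the one giving the replacement chunk `w` the execution time
`(w₁/s₁ + w₂/s₂) / 2`, so the two equal chunks sit at the midpoint of `(w₁, w₁/s₁)` and
`(w₂, w₂/s₂)`: time is preserved and energy strictly drops. Midpoint convexity of the two
nonlinear terms comes from explicit sum-of-squares identities.
-/

open Real

section MidpointInequalities

variable {a b p q : ℝ}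

lemma cube_div_sq_add_cube_div_sq_sub_eq (hp : p ≠ 0) (hq : q ≠ 0) (hpq : p + q ≠ 0) :
    a ^ 3 / p ^ 2 + b ^ 3 / q ^ 2 - (a + b) ^ 3 / (p + q) ^ 2
      = (a * q - b * p) ^ 2 * (a * q * (2 * p + q) + b * p * (2 * q + p))
        / (p ^ 2 * q ^ 2 * (p + q) ^ 2) := by
  field_simp
  ring

lemma add_cube_div_add_sq_le (ha : 0 ≤ a) (hb : 0 ≤ b) (hp : 0 < p) (hq : 0 < q) :
    (a + b) ^ 3 / (p + q) ^ 2 ≤ a ^ 3 / p ^ 2 + b ^ 3 / q ^ 2 := by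
  have h := cube_div_sq_add_cube_div_sq_sub_eq (a := a) (b := b) hp.ne' hq.ne' (by positivity)
  have : 0 ≤ a ^ 3 / p ^ 2 + b ^ 3 / q ^ 2 - (a + b) ^ 3 / (p + q) ^ 2 := by
    rw [h]; positivity
  linarith

lemma add_cube_div_add_sq_lt (ha : 0 ≤ a) (hb : 0 ≤ b) (hp : 0 < p) (hq : 0 < q)
    (hne : a * q ≠ b * p) :
    (a + b) ^ 3 / (p + q) ^ 2 < a ^ 3 / p ^ 2 + b ^ 3 / q ^ 2 := by
  have h := cube_div_sq_add_cube_div_sq_sub_eq (a := a) (b := b) hp.ne' hq.ne' (by positivity)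
  have hab : 0 < a ∨ 0 < b := by
    by_contra! h0
    exact hne (by rw [le_antisymm h0.1 ha, le_antisymm h0.2 hb]; ring)
  have hfac : 0 < a * q * (2 * p + q) + b * p * (2 * q + p) := by
    rcases hab with ha' | hb'
    · have : 0 < a * q * (2 * p + q) := by positivity
      nlinarith [mul_nonneg (mul_nonneg hb hp.le) (by positivity : (0 : ℝ) ≤ 2 * q + p)]
    · have : 0 < b * p * (2 * q + p) := by positivity
      nlinarith [mul_nonneg (mul_nonneg ha hq.le) (by positivity : (0 : ℝ) ≤ 2 * p + q)]
  have : 0 < a ^ 3 / p ^ 2 + b ^ 3 / q ^ 2 - (a + b) ^ 3 / (p + q) ^ 2 := by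
    rw [h]
    have : 0 < (a * q - b * p) ^ 2 := by positivity [sub_ne_zero.mpr hne]
    positivity
  linarith

lemma sq_cube_div_add_sq_cube_div_sub_eq {u v : ℝ} (hp : p ≠ 0) (hq : q ≠ 0)
    (hpq : p + q ≠ 0) :
    (u ^ 2) ^ 3 / p + (v ^ 2) ^ 3 / q - (u ^ 2 + v ^ 2) ^ 3 / (2 * (p + q))
      = (2 * (u ^ 3 * q - v ^ 3 * p) ^ 2
          + p * q * (u - v) ^ 2 * (u ^ 4 + 2 * u ^ 3 * v + 2 * u * v ^ 3 + v ^ 4))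
        / (2 * p * q * (p + q)) := by
  field_simp
  ring

lemma add_cube_div_two_mul_add_le (ha : 0 ≤ a) (hb : 0 ≤ b) (hp : 0 < p) (hq : 0 < q) :
    (a + b) ^ 3 / (2 * (p + q)) ≤ a ^ 3 / p + b ^ 3 / q := by
  obtain ⟨u, hu, rfl⟩ : ∃ u, 0 ≤ u ∧ u ^ 2 = a := ⟨√a, sqrt_nonneg a, sq_sqrt ha⟩
  obtain ⟨v, hv, rfl⟩ : ∃ v, 0 ≤ v ∧ v ^ 2 = b := ⟨√b, sqrt_nonneg b, sq_sqrt hb⟩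
  have h := sq_cube_div_add_sq_cube_div_sub_eq (u := u) (v := v) hp.ne' hq.ne' (by positivity)
  have : 0 ≤ (u ^ 2) ^ 3 / p + (v ^ 2) ^ 3 / q - (u ^ 2 + v ^ 2) ^ 3 / (2 * (p + q)) := by
    rw [h]; positivity
  linarith

lemma add_cube_div_two_mul_add_lt (ha : 0 ≤ a) (hb : 0 ≤ b) (hp : 0 < p) (hq : 0 < q)
    (hne : a ≠ b) :
    (a + b) ^ 3 / (2 * (p + q)) < a ^ 3 / p + b ^ 3 / q := by
  obtain ⟨u, hu, rfl⟩ : ∃ u, 0 ≤ u ∧ u ^ 2 = a := ⟨√a, sqrt_nonneg a, sq_sqrt ha⟩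
  obtain ⟨v, hv, rfl⟩ : ∃ v, 0 ≤ v ∧ v ^ 2 = b := ⟨√b, sqrt_nonneg b, sq_sqrt hb⟩
  have huv : u ≠ v := fun h => hne (by rw [h])
  have h := sq_cube_div_add_sq_cube_div_sub_eq (u := u) (v := v) hp.ne' hq.ne' (by positivity)
  have hfac : 0 < u ^ 4 + 2 * u ^ 3 * v + 2 * u * v ^ 3 + v ^ 4 := by
    rcases lt_or_gt_of_ne huv with h' | h'
    · have : 0 < v := hu.trans_lt h'
      positivity
    · have : 0 < u := hv.trans_lt h'
      positivity
  have : 0 < (u ^ 2) ^ 3 / p + (v ^ 2) ^ 3 / q - (u ^ 2 + v ^ 2) ^ 3 / (2 * (p + q)) := by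
    rw [h]
    have : 0 < (u - v) ^ 2 := by positivity [sub_ne_zero.mpr huv]
    positivity
  linarith

end MidpointInequalities

noncomputable def chunkEnergy (lam tC EC ω t : ℝ) : ℝ :=
  (1 + lam * tC) * (ω ^ 3 / t ^ 2) + lam * (ω ^ 3 / t) + EC * (1 + lam * (t + tC))

lemma energy_eq_chunkEnergy (lam tC EC ω v : ℝ) :
    (ω * v ^ 2 + EC) * (1 + lam * (ω / v + tC)) = chunkEnergy lam tC EC ω (ω / v) := by
  rcases eq_or_ne ω 0 with rfl | hω
  · simp [chunkEnergy]
  rcases eq_or_ne v 0 with rfl | hv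
  · simp [chunkEnergy]
  simp only [chunkEnergy]
  field_simp
  ring

lemma chunkEnergy_midpoint_lt {lam tC EC a b p q : ℝ} (hlam : 0 < lam) (htC : 0 ≤ tC)
    (ha : 0 < a) (hb : 0 < b) (hp : 0 < p) (hq : 0 < q) (hne : (a, p) ≠ (b, q)) :
    2 * chunkEnergy lam tC EC ((a + b) / 2) ((p + q) / 2)
      < chunkEnergy lam tC EC a p + chunkEnergy lam tC EC b q := by
  have hsplit : chunkEnergy lam tC EC a p + chunkEnergy lam tC EC b q
      - 2 * chunkEnergy lam tC EC ((a + b) / 2) ((p + q) / 2)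
      = (1 + lam * tC) * (a ^ 3 / p ^ 2 + b ^ 3 / q ^ 2 - (a + b) ^ 3 / (p + q) ^ 2)
        + lam * (a ^ 3 / p + b ^ 3 / q - (a + b) ^ 3 / (2 * (p + q))) := by
    simp only [chunkEnergy]
    field_simp
    ring
  have hA : 0 < 1 + lam * tC := by positivity
  have hsq := add_cube_div_add_sq_le ha.le hb.le hp hq
  have hlin := add_cube_div_two_mul_add_le ha.le hb.le hp hq
  by_cases hprop : a * q = b * p
  · have hab : a ≠ b := by
      rintro rfl
      exact hne (by rw [mul_left_cancel₀ ha.ne' hprop])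
    have := add_cube_div_two_mul_add_lt ha.le hb.le hp hq hab
    nlinarith
  · have := add_cube_div_add_sq_lt ha.le hb.le hp hq hprop
    nlinarith

theorem stmt_13_general (lam tC EC w1 w2 s1 s2 : ℝ) (hlam : 0 < lam) (htC : 0 ≤ tC)
    (hw1 : 0 < w1) (hw2 : 0 < w2) (hs1 : 0 < s1) (hs2 : 0 < s2)
    (hne : (s1, w1) ≠ (s2, w2))
    (w s : ℝ) (hw : w = (w1 + w2) / 2) (hs : s = (w1 + w2) / (w1 / s1 + w2 / s2))
    (Twc E : ℝ → ℝ → ℝ)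
    (hT : ∀ ω v : ℝ, Twc ω v = 2 * (ω / v + tC))
    (hE : ∀ ω v : ℝ, E ω v = (ω * v ^ 2 + EC) * (1 + lam * (ω / v + tC))) :
    2 * Twc w s = Twc w1 s1 + Twc w2 s2 ∧ 2 * E w s < E w1 s1 + E w2 s2 := by
  have hmid : w / s = (w1 / s1 + w2 / s2) / 2 := by
    rw [hw, hs]
    field_simp
  have hne' : (w1, w1 / s1) ≠ (w2, w2 / s2) := by
    intro h
    obtain ⟨rfl, hdiv⟩ := Prod.mk.inj h
    have : s1 = s2 := by field_simp at hdiv; linarith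
    exact hne (by rw [this])
  refine ⟨?_, ?_⟩
  · simp only [hT, hmid]
    ring
  · simp only [hE, energy_eq_chunkEnergy]
    rw [hmid, hw]
    exact chunkEnergy_midpoint_lt hlam htC hw1 hw2 (div_pos hw1 hs1) (div_pos hw2 hs2) hne'

/-- Exchange argument for single-speed, hard-deadline. With
`T_wc(ω, v) = 2 (ω/v + t_C)` and `E(ω, v) = (ω v² + E_C)(1 + λ (ω/v + t_C))`,
replacing two unequal chunks `(w₁, s₁), (w₂, s₂)` (with `w₁/s₁ ≥ w₂/s₂`) by two
equal chunks of size `w = (w₁+w₂)/2` at speed `s_A = (w₁+w₂)/(w₁/s₁ + w₂/s₂)`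
preserves the worst-case time and strictly decreases the expected energy. -/
theorem stmt_13 (lam tC EC w1 w2 s1 s2 : ℝ) (hlam : 0 < lam) (htC : 0 ≤ tC)
    (hEC : 0 ≤ EC) (hw1 : 0 < w1) (hw2 : 0 < w2) (hs1 : 0 < s1) (hs2 : 0 < s2)
    (hord : w2 / s2 ≤ w1 / s1) (hne : (s1, w1) ≠ (s2, w2))
    (w s : ℝ) (hw : w = (w1 + w2) / 2) (hs : s = (w1 + w2) / (w1 / s1 + w2 / s2))
    (Twc E : ℝ → ℝ → ℝ)
    (hT : ∀ ω v : ℝ, Twc ω v = 2 * (ω / v + tC))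
    (hE : ∀ ω v : ℝ, E ω v = (ω * v ^ 2 + EC) * (1 + lam * (ω / v + tC))) :
    2 * Twc w s = Twc w1 s1 + Twc w2 s2 ∧ 2 * E w s < E w1 s1 + E w2 s2 :=
  stmt_13_general lam tC EC w1 w2 s1 s2 hlam htC hw1 hw2 hs1 hs2 hne w s hw hs Twc E hT hE
end

section
/- Let λ > 0, t_C ≥ 0, E_C ≥ 0, σ > 0 and let w₁, w₂, s₁, s₂ be positive reals with w₁ < w₂. Define w = (w₁ + w₂)/2, s_A = (w₁ + w₂)/(w₁/s₁ + w₂/s₂), s_B = (w₁ + w₂)²/(2·(w₁²/s₁ + w₂²/s₂)), and s = max(s_A, s_B). For a chunk of size ω executed at speed v and re-executed at speed σ let T(ω, v) = (ω/v + t_C) + λ·(ω/v + t_C)·(ω/σ + t_C) and E(ω, v) = (ω·v² + E_C) + λ·(ω/v + t_C)·(ω·σ² + E_C). Then 2·T(w, s) ≤ T(w₁, s₁) + T(w₂, s₂) and 2·E(w, s) < E(w₁, s₁) + E(w₂, s₂). -/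
/-! Write `m = (w₁s₁ + w₂s₂)/(w₁ + w₂)` for the weighted mean speed. The re-execution terms have
the form `λ·(ω/v + t_C)·(cω + d)` with `c, d ≥ 0`, so for the pair of chunks they only depend on
the moments `Σ w_i/s_i` and `Σ w_i²/s_i`; these dominate `(w₁ + w₂)/s` and `(w₁ + w₂)²/(2s)`
because `s ≥ s_A` and `s ≥ s_B`. For the energy, `s_A ≤ m` (harmonic ≤ arithmetic mean),
`s_B < m` (Cauchy–Schwarz plus a power-mean estimate, strict as `w₁ ≠ w₂`) and
`(w₁ + w₂)m² ≤ Σ w_i s_i²`. So either `s < m` and the speed term drops strictly, or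
`s = m > s_B` and the second-moment bound, hence the re-execution energy, drops strictly. -/

lemma harm_mean_le_arith_mean_weighted_two {w1 w2 s1 s2 : ℝ} (hw1 : 0 < w1) (hw2 : 0 < w2)
    (hs1 : 0 < s1) (hs2 : 0 < s2) :
    (w1 + w2) / (w1 / s1 + w2 / s2) ≤ (w1 * s1 + w2 * s2) / (w1 + w2) := by
  rw [div_le_div_iff₀ (by positivity) (by positivity)]
  have hgap : (w1 / s1 + w2 / s2) * (w1 * s1 + w2 * s2) - (w1 + w2) * (w1 + w2) =
      w1 * w2 * (s1 - s2) ^ 2 / (s1 * s2) := by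
    field_simp
    ring
  have : 0 ≤ w1 * w2 * (s1 - s2) ^ 2 / (s1 * s2) := by positivity
  linarith

lemma sq_add_sq_pow_three_lt {p q : ℝ} (hp : 0 < p) (hq : 0 < q) (hpq : p ≠ q) :
    (p ^ 2 + q ^ 2) ^ 3 < 2 * (p ^ 3 + q ^ 3) ^ 2 := by
  have hgap : 2 * (p ^ 3 + q ^ 3) ^ 2 - (p ^ 2 + q ^ 2) ^ 3 =
      (p - q) ^ 2 * (p ^ 4 + 2 * p ^ 3 * q + 2 * p * q ^ 3 + q ^ 4) := by ring
  have := sub_ne_zero.2 hpq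
  have : 0 < (p - q) ^ 2 * (p ^ 4 + 2 * p ^ 3 * q + 2 * p * q ^ 3 + q ^ 4) := by positivity
  linarith

lemma sq_div_sum_sq_div_lt_arith_mean_weighted_two {w1 w2 s1 s2 : ℝ} (hw1 : 0 < w1)
    (hw2 : 0 < w2) (hs1 : 0 < s1) (hs2 : 0 < s2) (hne : w1 ≠ w2) :
    (w1 + w2) ^ 2 / (2 * (w1 ^ 2 / s1 + w2 ^ 2 / s2)) < (w1 * s1 + w2 * s2) / (w1 + w2) := by
  obtain ⟨p, hp, rfl⟩ : ∃ p, 0 < p ∧ p ^ 2 = w1 := ⟨√w1, by positivity, Real.sq_sqrt hw1.le⟩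
  obtain ⟨q, hq, rfl⟩ : ∃ q, 0 < q ∧ q ^ 2 = w2 := ⟨√w2, by positivity, Real.sq_sqrt hw2.le⟩
  have hpq : p ≠ q := by
    rintro rfl
    exact hne rfl
  rw [div_lt_div_iff₀ (by positivity) (by positivity)]
  -- Cauchy–Schwarz for `p³ = (p²/√s₁)(p√s₁)` and `q³ = (q²/√s₂)(q√s₂)`
  have hgap : ((p ^ 2) ^ 2 / s1 + (q ^ 2) ^ 2 / s2) * (p ^ 2 * s1 + q ^ 2 * s2) -
      (p ^ 3 + q ^ 3) ^ 2 = p ^ 2 * q ^ 2 * (p * s2 - q * s1) ^ 2 / (s1 * s2) := by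
    field_simp
    ring
  have : 0 ≤ p ^ 2 * q ^ 2 * (p * s2 - q * s1) ^ 2 / (s1 * s2) := by positivity
  nlinarith [sq_add_sq_pow_three_lt hp hq hpq]

lemma mul_arith_mean_weighted_sq_le_two {w1 w2 : ℝ} (s1 s2 : ℝ) (hw1 : 0 ≤ w1) (hw2 : 0 ≤ w2)
    (hw : 0 < w1 + w2) :
    (w1 + w2) * ((w1 * s1 + w2 * s2) / (w1 + w2)) ^ 2 ≤ w1 * s1 ^ 2 + w2 * s2 ^ 2 := by
  have hgap : w1 * s1 ^ 2 + w2 * s2 ^ 2 - (w1 + w2) * ((w1 * s1 + w2 * s2) / (w1 + w2)) ^ 2 =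
      w1 * w2 * (s1 - s2) ^ 2 / (w1 + w2) := by
    field_simp
    ring
  have : 0 ≤ w1 * w2 * (s1 - s2) ^ 2 / (w1 + w2) := by positivity
  linarith

lemma retry_exchange_le {w1 w2 s1 s2 s t c d : ℝ} (hc : 0 ≤ c) (hd : 0 ≤ d)
    (hA : (w1 + w2) / s ≤ w1 / s1 + w2 / s2)
    (hB : (w1 + w2) ^ 2 / 2 / s ≤ w1 ^ 2 / s1 + w2 ^ 2 / s2) :
    2 * (((w1 + w2) / 2 / s + t) * (c * ((w1 + w2) / 2) + d)) ≤
      (w1 / s1 + t) * (c * w1 + d) + (w2 / s2 + t) * (c * w2 + d) := by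
  linear_combination d * hA + c * hB

lemma retry_exchange_lt {w1 w2 s1 s2 s t c d : ℝ} (hc : 0 < c) (hd : 0 ≤ d)
    (hA : (w1 + w2) / s ≤ w1 / s1 + w2 / s2)
    (hB : (w1 + w2) ^ 2 / 2 / s < w1 ^ 2 / s1 + w2 ^ 2 / s2) :
    2 * (((w1 + w2) / 2 / s + t) * (c * ((w1 + w2) / 2) + d)) <
      (w1 / s1 + t) * (c * w1 + d) + (w2 / s2 + t) * (c * w2 + d) := by
  linear_combination d * hA + c * hB

/-- Exchange argument for the multiple-speeds model. With a common
re-execution speed `σ`, `T(ω, v) = (ω/v + t_C) + λ (ω/v + t_C)(ω/σ + t_C)` and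
`E(ω, v) = (ω v² + E_C) + λ (ω/v + t_C)(ω σ² + E_C)`, replacing two chunks of
different sizes `w₁ < w₂` executed at speeds `s₁, s₂` by two equal chunks of size
`w = (w₁+w₂)/2` at speed `s = max(s_A, s_B)` does not increase the expected time
and strictly decreases the expected energy. -/
theorem stmt_14 (lam tC EC σ w1 w2 s1 s2 : ℝ) (hlam : 0 < lam) (htC : 0 ≤ tC)
    (hEC : 0 ≤ EC) (hσ : 0 < σ) (hw1 : 0 < w1) (hw2 : 0 < w2)
    (hs1 : 0 < s1) (hs2 : 0 < s2) (hlt : w1 < w2)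
    (w sA sB s : ℝ) (hw : w = (w1 + w2) / 2)
    (hsA : sA = (w1 + w2) / (w1 / s1 + w2 / s2))
    (hsB : sB = (w1 + w2) ^ 2 / (2 * (w1 ^ 2 / s1 + w2 ^ 2 / s2)))
    (hsmax : s = max sA sB)
    (T E : ℝ → ℝ → ℝ)
    (hT : ∀ ω v : ℝ, T ω v = (ω / v + tC) + lam * (ω / v + tC) * (ω / σ + tC))
    (hE : ∀ ω v : ℝ, E ω v = (ω * v ^ 2 + EC) + lam * (ω / v + tC) * (ω * σ ^ 2 + EC)) :
    2 * T w s ≤ T w1 s1 + T w2 s2 ∧ 2 * E w s < E w1 s1 + E w2 s2 := by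
  subst hw
  have hsA_le : sA ≤ s := hsmax ▸ le_max_left sA sB
  have hsB_le : sB ≤ s := hsmax ▸ le_max_right sA sB
  have hs : 0 < s := hsA_le.trans_lt' (by rw [hsA]; positivity)
  have hsB_div : sB = (w1 + w2) ^ 2 / 2 / (w1 ^ 2 / s1 + w2 ^ 2 / s2) := by rw [hsB, div_div]
  have hA : (w1 + w2) / s ≤ w1 / s1 + w2 / s2 := by
    rwa [div_le_comm₀ hs (by positivity), ← hsA]
  have hB : (w1 + w2) ^ 2 / 2 / s ≤ w1 ^ 2 / s1 + w2 ^ 2 / s2 := by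
    rwa [div_le_comm₀ hs (by positivity), ← hsB_div]
  set m := (w1 * s1 + w2 * s2) / (w1 + w2)
  have hsB_lt : sB < m :=
    hsB ▸ sq_div_sum_sq_div_lt_arith_mean_weighted_two hw1 hw2 hs1 hs2 hlt.ne
  have hs_le : s ≤ m := hsmax ▸ max_le
    (hsA ▸ harm_mean_le_arith_mean_weighted_two hw1 hw2 hs1 hs2) hsB_lt.le
  have hm : (w1 + w2) * m ^ 2 ≤ w1 * s1 ^ 2 + w2 * s2 ^ 2 :=
    mul_arith_mean_weighted_sq_le_two s1 s2 hw1.le hw2.le (by positivity)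
  simp only [hT, hE]
  refine ⟨?_, ?_⟩
  · linear_combination
      hA + lam * retry_exchange_le (t := tC) (c := σ⁻¹) (d := tC) (by positivity) htC hA hB
  rcases hs_le.lt_or_eq with hs_lt | hs_eq
  · have hspeed : (w1 + w2) * s ^ 2 < w1 * s1 ^ 2 + w2 * s2 ^ 2 :=
      lt_of_lt_of_le (by gcongr) hm
    linear_combination
      hspeed + lam * retry_exchange_le (t := tC) (c := σ ^ 2) (by positivity) hEC hA hB
  · have hB_strict : (w1 + w2) ^ 2 / 2 / s < w1 ^ 2 / s1 + w2 ^ 2 / s2 := by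
      rw [div_lt_comm₀ hs (by positivity), ← hsB_div, hs_eq]
      exact hsB_lt
    have hspeed : (w1 + w2) * s ^ 2 ≤ w1 * s1 ^ 2 + w2 * s2 ^ 2 := hs_eq ▸ hm
    linear_combination
      hspeed + lam * retry_exchange_lt (t := tC) (c := σ ^ 2) (by positivity) hEC hA hB_strict
end

section
/- Let W > 0, s > 0, σ > 0 and t_C ≥ 0 be real constants, and set τ₁ = W/s + t_C, τ₂ = W/σ + t_C. Define f(λ) = τ₁ + e^{λ·τ₂}·(1 − e^{−λ·τ₁})·τ₂ for λ ∈ ℝ. Then, as λ → 0, f(λ) = τ₁ + λ·τ₁·τ₂ + O(λ²); that is, the function λ ↦ f(λ) − τ₁ − λ·τ₁·τ₂ is big-O of λ² as λ → 0. -/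
open Real Filter Asymptotics

lemma exp_taylor_bigO (c : ℝ) :
    (fun x : ℝ => Real.exp (c * x) - 1 - c * x) =O[nhds 0] (fun x : ℝ => x ^ 2) := by
  apply IsBigO.of_bound (c ^ 2)
  have h1 : ∀ᶠ x : ℝ in nhds 0, |c * x| ≤ 1 := by
    have hc : Continuous fun x : ℝ => |c * x| := (continuous_const.mul continuous_id).abs
    have := hc.tendsto 0
    simp only [mul_zero, abs_zero] at this
    exact this.eventually_le_const (by norm_num)
  filter_upwards [h1] with x hx
  have := Real.abs_exp_sub_one_sub_id_le hx
  calc ‖Real.exp (c * x) - 1 - c * x‖ ≤ (c * x) ^ 2 := this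
    _ = c ^ 2 * ‖x ^ 2‖ := by
        rw [Real.norm_eq_abs, abs_pow, sq_abs]; ring

/-- The exact expected execution time
`f(λ) = τ₁ + e^{λ τ₂} (1 − e^{−λ τ₁}) τ₂` under Exponential failures satisfies
`f(λ) = τ₁ + λ τ₁ τ₂ + O(λ²)` as `λ → 0`, where `τ₁ = W/s + t_C`, `τ₂ = W/σ + t_C`. -/
theorem stmt_15 (W s σ tC : ℝ) (hW : 0 < W) (hs : 0 < s) (hσ : 0 < σ)
    (htC : 0 ≤ tC) (τ1 τ2 : ℝ) (hτ1 : τ1 = W / s + tC) (hτ2 : τ2 = W / σ + tC) :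
    (fun lam : ℝ =>
        (τ1 + Real.exp (lam * τ2) * (1 - Real.exp (-lam * τ1)) * τ2) -
          τ1 - lam * τ1 * τ2) =O[nhds 0] (fun lam : ℝ => lam ^ 2) := by
  have key : (fun lam : ℝ => τ2 * ((Real.exp (τ2 * lam) - 1 - τ2 * lam) -
      (Real.exp ((τ2 - τ1) * lam) - 1 - (τ2 - τ1) * lam))) =O[nhds 0]
      (fun lam : ℝ => lam ^ 2) :=
    ((exp_taylor_bigO τ2).sub (exp_taylor_bigO (τ2 - τ1))).const_mul_left τ2
  refine key.congr_left fun lam => ?_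
  have h : Real.exp (lam * τ2) * Real.exp (-lam * τ1) = Real.exp ((τ2 - τ1) * lam) := by
    rw [← Real.exp_add]; ring_nf
  have h2 : Real.exp (τ2 * lam) = Real.exp (lam * τ2) := by ring_nf
  rw [h2, ← h]
  ring
end
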